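/- The subspace X₀ = {x ∈ 2^κ : x(α) = 0 for at most finitely many α < κ} of the generalized Cantor space 2^κ is a nonempty κ-additive κ-perfect κ-Lindelöf fSC_κ-space; in particular X₀ is κ-Lindelöf. -/

import Mathlib

universe u v

open Cardinal Set

namespace GDST

/-- A *limit element* of an order: an element with some predecessor but
no immediate predecessor (i.e. it sits at a limit position). -/
def IsLimitElt {α : Type v} [LT α] (a : α) : Prop :=
  (∃ b, b < a) ∧ ∀ b, b < a → ∃ c, b < c ∧ c < a

/-- The space `X` has weight at most `κ`: it admits a topological basis of cardinality ≤ κ. -/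
def HasWeightLE (κ : Cardinal.{u}) (X : Type u) [TopologicalSpace X] : Prop :=
  ∃ B : Set (Set X), TopologicalSpace.IsTopologicalBasis B ∧ #B ≤ κ

/-- `X` is `κ`-additive: intersections of fewer than `κ` open sets are open. -/
def KAdditive (κ : Cardinal.{u}) (X : Type u) [TopologicalSpace X] : Prop :=
  ∀ S : Set (Set X), #S < κ → (∀ U ∈ S, IsOpen U) → IsOpen (⋂₀ S)

/-- `X` is `κ`-Lindelöf: every open cover has a subcover of size `< κ`. -/
def KLindelof (κ : Cardinal.{u}) (X : Type u) [TopologicalSpace X] : Prop :=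
  ∀ 𝒰 : Set (Set X), (∀ U ∈ 𝒰, IsOpen U) → ⋃₀ 𝒰 = Set.univ →
    ∃ 𝒱 ⊆ 𝒰, #𝒱 < κ ∧ ⋃₀ 𝒱 = Set.univ

/-- `X` is `κ`-perfect: no point `x` is `κ`-isolated, i.e. no `{x}` is an intersection
of fewer than `κ` open sets. -/
def KPerfect (κ : Cardinal.{u}) (X : Type u) [TopologicalSpace X] : Prop :=
  ∀ x : X, ¬ ∃ S : Set (Set X), #S < κ ∧ (∀ U ∈ S, IsOpen U) ∧ ⋂₀ S = {x}

/-- `A` is `G_δ^κ` in `X`: an intersection of `κ`-many open sets. -/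
def IsGDeltaKappa (κ : Cardinal.{u}) {X : Type u} [TopologicalSpace X] (A : Set X) : Prop :=
  ∃ U : κ.ord.ToType → Set X, (∀ i, IsOpen (U i)) ∧ A = ⋂ i, U i

/-! ### Generalized Baire and Cantor spaces -/

/-- The bounded topology on `ι → A`: generated by the sets of functions with a
prescribed restriction to a proper initial segment `{b | b < a}` of `ι`. -/
def BoundedTopology (ι : Type u) [LinearOrder ι] (A : Type v) : TopologicalSpace (ι → A) :=
  TopologicalSpace.generateFrom
    {U | ∃ (a : ι) (y : ι → A), U = {x : ι → A | ∀ b, b < a → x b = y b}}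

/-- The generalized Baire space `κ^κ`. -/
def GenBaire (κ : Cardinal.{u}) : Type u := κ.ord.ToType → κ.ord.ToType

noncomputable instance (κ : Cardinal.{u}) : TopologicalSpace (GenBaire κ) :=
  BoundedTopology κ.ord.ToType κ.ord.ToType

/-- The generalized Cantor space `2^κ`. -/
def GenCantor (κ : Cardinal.{u}) : Type u := κ.ord.ToType → Bool

noncomputable instance (κ : Cardinal.{u}) : TopologicalSpace (GenCantor κ) :=
  BoundedTopology κ.ord.ToType Bool

/-! ### The strong and fair (strong) κ-Choquet games -/

/-- A transfinite sequence of moves of player I: at each round a pair `(U, x)`. -/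
abbrev IMoves (κ : Cardinal.{u}) (X : Type u) : Type u := κ.ord.ToType → Set X × X

/-- A strategy for player II: given the moves of I (only the moves up to the current
round may be used, see `IsIIStrategy`) and the current round, produce II's move. -/
abbrev Strategy (κ : Cardinal.{u}) (X : Type u) : Type u := IMoves κ X → κ.ord.ToType → Set X

/-- The intersection of the sets played before round `a`. -/
def InterBelow {ι : Type u} {X : Type u} [LT ι] (V : ι → Set X) (a : ι) : Set X :=
  ⋂ b, ⋂ (_ : b < a), V b

/-- `U` is relatively open in `T`. -/
def RelOpenIn {X : Type u} [TopologicalSpace X] (T U : Set X) : Prop :=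
  ∃ W : Set X, IsOpen W ∧ U = W ∩ T

/-- Player I's move at round `a` is legal: `(f a).1` is a nonempty relatively open subset of
the intersection of all previously played sets, and the point `(f a).2` belongs to it. -/
def LegalI {κ : Cardinal.{u}} {X : Type u} [TopologicalSpace X]
    (σ : Strategy κ X) (f : IMoves κ X) (a : κ.ord.ToType) : Prop :=
  RelOpenIn (InterBelow (σ f) a) (f a).1 ∧ (f a).2 ∈ (f a).1

/-- Player II's answer (by `σ`) at round `a` is legal: it is relatively open in the
intersection of all previously played sets, contains I's point, and is contained in I's set. -/
def LegalII {κ : Cardinal.{u}} {X : Type u} [TopologicalSpace X]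
    (σ : Strategy κ X) (f : IMoves κ X) (a : κ.ord.ToType) : Prop :=
  RelOpenIn (InterBelow (σ f) a) (σ f a) ∧ (f a).2 ∈ σ f a ∧ σ f a ⊆ (f a).1

/-- All moves before round `a` were legal. -/
def LegalBelow {κ : Cardinal.{u}} {X : Type u} [TopologicalSpace X]
    (σ : Strategy κ X) (f : IMoves κ X) (a : κ.ord.ToType) : Prop :=
  ∀ b, b < a → LegalI σ f b ∧ LegalII σ f b

/-- `σ` only depends on the moves of I played so far. -/
def IsIIStrategy {κ : Cardinal.{u}} {X : Type u} (σ : Strategy κ X) : Prop :=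
  ∀ f g : IMoves κ X, ∀ a, (∀ b, b ≤ a → f b = g b) → σ f a = σ g a

/-- `σ` is a winning strategy for player II in the strong κ-Choquet game `G^s_κ(X)`:
it answers legally to legal positions, and in any (possibly partial) legal run the
intersection of the played sets at every limit round—including the final one—is nonempty. -/
def WinningStrong {κ : Cardinal.{u}} {X : Type u} [TopologicalSpace X]
    (σ : Strategy κ X) : Prop :=
  IsIIStrategy σ ∧
  (∀ f a, LegalBelow σ f a → LegalI σ f a → LegalII σ f a) ∧
  (∀ f a, IsLimitElt a → LegalBelow σ f a → (InterBelow (σ f) a).Nonempty) ∧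
  (∀ f, (∀ a, LegalI σ f a ∧ LegalII σ f a) → (⋂ a, σ f a).Nonempty)

/-- `σ` is a winning strategy for player II in the fair strong κ-Choquet game `fG^s_κ(X)`:
it answers legally to legal positions, and for every legal run either the intersection of
the played sets is empty at some limit round `< κ`, or the final intersection is nonempty. -/
def WinningFair {κ : Cardinal.{u}} {X : Type u} [TopologicalSpace X]
    (σ : Strategy κ X) : Prop :=
  IsIIStrategy σ ∧
  (∀ f a, LegalBelow σ f a → LegalI σ f a → LegalII σ f a) ∧
  (∀ f, (∀ a, LegalI σ f a ∧ LegalII σ f a) →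
    (∃ a, IsLimitElt a ∧ InterBelow (σ f) a = ∅) ∨ (⋂ a, σ f a).Nonempty)

/-- `X` is a strong κ-Choquet space. -/
def SCSpace (κ : Cardinal.{u}) (X : Type u) [TopologicalSpace X] : Prop :=
  HasWeightLE κ X ∧ ∃ σ : Strategy κ X, WinningStrong σ

/-- `X` is a strongly fair κ-Choquet space. -/
def fSCSpace (κ : Cardinal.{u}) (X : Type u) [TopologicalSpace X] : Prop :=
  HasWeightLE κ X ∧ ∃ σ : Strategy κ X, WinningFair σ

/-! ### Trees on κ -/

/-- Sequences of length `< κ` with values in `κ`, encoded as pairs `(a, x)` representing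
the restriction of `x : κ → κ` to the initial segment `{b | b < a}`. -/
abbrev TreeSeq (κ : Cardinal.{u}) : Type u := κ.ord.ToType × (κ.ord.ToType → κ.ord.ToType)

/-- `T` is a tree on `κ`: membership of `(a, x)` only depends on the restriction of `x`
below `a` (so that `T` really is a set of `<κ`-sequences), and `T` is closed under
initial segments. -/
def IsTreeOn (κ : Cardinal.{u}) (T : Set (TreeSeq κ)) : Prop :=
  (∀ a, ∀ x y : κ.ord.ToType → κ.ord.ToType,
      (∀ b, b < a → x b = y b) → ((a, x) ∈ T ↔ (a, y) ∈ T)) ∧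
  (∀ a x, (a, x) ∈ T → ∀ b, b ≤ a → (b, x) ∈ T)

/-- The body `[T]` of a tree `T` on `κ`. -/
def TreeBody (κ : Cardinal.{u}) (T : Set (TreeSeq κ)) : Set (GenBaire κ) :=
  {x | ∀ a, (a, x) ∈ T}

/-- `T` is pruned: every element has extensions in `T` of every length `< κ`. -/
def TreePruned (κ : Cardinal.{u}) (T : Set (TreeSeq κ)) : Prop :=
  ∀ a x, (a, x) ∈ T → ∀ c, a ≤ c → ∃ y, (∀ b, b < a → y b = x b) ∧ (c, y) ∈ T

/-- `T` is `<κ`-closed: a limit-length sequence all of whose proper initial segments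
lie in `T` lies in `T`. -/
def TreeLtClosed (κ : Cardinal.{u}) (T : Set (TreeSeq κ)) : Prop :=
  ∀ a, IsLimitElt a → ∀ x, (∀ b, b < a → (b, x) ∈ T) → (a, x) ∈ T

/-- `T` is superclosed: a pruned and `<κ`-closed tree. -/
def IsSuperclosedTree (κ : Cardinal.{u}) (T : Set (TreeSeq κ)) : Prop :=
  IsTreeOn κ T ∧ TreePruned κ T ∧ TreeLtClosed κ T

/-- A subset of the generalized Baire space is superclosed if it is the body of a
superclosed tree. -/
def IsSuperclosedSet (κ : Cardinal.{u}) (C : Set (GenBaire κ)) : Prop :=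
  ∃ T : Set (TreeSeq κ), IsSuperclosedTree κ T ∧ C = TreeBody κ T

/-- The `a`-th level of a tree `T` on `κ`. -/
def TreeLev (κ : Cardinal.{u}) (T : Set (TreeSeq κ)) (a : κ.ord.ToType) :
    Set ({b : κ.ord.ToType // b < a} → κ.ord.ToType) :=
  {s | ∃ x, (a, x) ∈ T ∧ ∀ b : {b : κ.ord.ToType // b < a}, x b.1 = s b}

/-- κ has the tree property: every tree on κ all of whose levels are nonempty of size `< κ`
has a (cofinal) branch. -/
def TreeProperty (κ : Cardinal.{u}) : Prop :=
  ∀ T : Set (TreeSeq κ), IsTreeOn κ T →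
    (∀ a, (TreeLev κ T a).Nonempty ∧ #(TreeLev κ T a) < κ) →
    ∃ x : κ.ord.ToType → κ.ord.ToType, ∀ a, (a, x) ∈ T

/-- κ is (strongly) inaccessible. -/
def Inaccessible (κ : Cardinal.{u}) : Prop :=
  ℵ₀ < κ ∧ κ.IsRegular ∧ ∀ μ : Cardinal.{u}, μ < κ → (2 : Cardinal.{u}) ^ μ < κ

/-- κ is weakly compact: inaccessible with the tree property. -/
def WeaklyCompact (κ : Cardinal.{u}) : Prop := Inaccessible κ ∧ TreeProperty κ

/-! ### κ-Borel sets -/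

/-- The κ-Borel subsets of a topological space: the smallest family containing the open
sets and closed under complements and unions of at most κ-many sets. -/
inductive KBorel (κ : Cardinal.{u}) {X : Type u} [TopologicalSpace X] : Set X → Prop
  | of_isOpen (U : Set X) : IsOpen U → KBorel κ U
  | compl (S : Set X) : KBorel κ S → KBorel κ Sᶜ
  | iUnion (ι : Type u) (f : ι → Set X) : #ι ≤ κ → (∀ i, KBorel κ (f i)) → KBorel κ (⋃ i, f i)

/-! ### 𝔾-metric spaces -/

section GMetric

variable (G : Type u) [AddCommGroup G] [LinearOrder G] [IsOrderedAddMonoid G]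

/-- The positive cone of `G` has coinitiality `κ`: there is a coinitial set of positive
elements of size `≤ κ`, and no such set of size `< κ`. -/
def HasDegree (κ : Cardinal.{u}) : Prop :=
  (∃ S : Set G, (∀ ε ∈ S, 0 < ε) ∧ (∀ δ : G, 0 < δ → ∃ ε ∈ S, ε ≤ δ) ∧ #S ≤ κ) ∧
  (∀ S : Set G, (∀ ε ∈ S, 0 < ε) → (∀ δ : G, 0 < δ → ∃ ε ∈ S, ε ≤ δ) → κ ≤ #S)

variable {G}

/-- `d` is a `𝔾`-metric on `X`. -/
structure IsGMetric {X : Type u} (d : X → X → G) : Prop where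
  nonneg : ∀ x y, 0 ≤ d x y
  eq_zero_iff : ∀ x y, d x y = 0 ↔ x = y
  symm : ∀ x y, d x y = d y x
  triangle : ∀ x y z, d x z ≤ d x y + d y z

/-- The open ball of center `x` and radius `ε`. -/
def GBall {X : Type u} (d : X → X → G) (x : X) (ε : G) : Set X := {y | d x y < ε}

/-- The topology induced by a `𝔾`-metric. -/
def GMetricTopology {X : Type u} (d : X → X → G) : TopologicalSpace X :=
  TopologicalSpace.generateFrom {U | ∃ x ε, 0 < ε ∧ U = GBall d x ε}

/-- The `𝔾`-metric `d` is compatible with the topology of `X`. -/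
def GCompatible {X : Type u} [t : TopologicalSpace X] (d : X → X → G) : Prop :=
  GMetricTopology d = t

/-- A `κ`-sequence is `d`-Cauchy. -/
def GCauchy (κ : Cardinal.{u}) {X : Type u} (d : X → X → G) (x : κ.ord.ToType → X) : Prop :=
  ∀ ε : G, 0 < ε → ∃ a, ∀ b, a ≤ b → ∀ c, a ≤ c → d (x b) (x c) < ε

/-- A `κ`-sequence `d`-converges to `y`. -/
def GConvergesTo (κ : Cardinal.{u}) {X : Type u} (d : X → X → G)
    (x : κ.ord.ToType → X) (y : X) : Prop :=
  ∀ ε : G, 0 < ε → ∃ a, ∀ b, a ≤ b → d (x b) y < ε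

/-- `d` is Cauchy-complete: every `d`-Cauchy `κ`-sequence converges. -/
def GCauchyComplete (κ : Cardinal.{u}) {X : Type u} (d : X → X → G) : Prop :=
  ∀ x : κ.ord.ToType → X, GCauchy κ d x → ∃ y, GConvergesTo κ d x y

/-- `X` is `𝔾`-metrizable: it admits a compatible `𝔾`-metric. -/
def GMetrizable (G : Type u) [AddCommGroup G] [LinearOrder G] [IsOrderedAddMonoid G]
    (X : Type u) [TopologicalSpace X] : Prop :=
  ∃ d : X → X → G, IsGMetric d ∧ GCompatible d

/-- `X` is `𝔾`-Polish: it has weight `≤ κ` and admits a compatible Cauchy-complete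
`𝔾`-metric. -/
def GPolish (G : Type u) [AddCommGroup G] [LinearOrder G] [IsOrderedAddMonoid G] (κ : Cardinal.{u})
    (X : Type u) [TopologicalSpace X] : Prop :=
  HasWeightLE κ X ∧ ∃ d : X → X → G, IsGMetric d ∧ GCompatible d ∧ GCauchyComplete κ d

/-- `d` is spherically complete: every (nonempty) ⊆-decreasing transfinite sequence of open
`d`-balls has nonempty intersection. -/
def SphericallyComplete {X : Type u} (d : X → X → G) : Prop :=
  ∀ o : Ordinal.{u}, o ≠ 0 → ∀ c : o.ToType → Set X,
    (∀ i, ∃ x ε, 0 < ε ∧ c i = GBall d x ε) →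
    (∀ i j, i ≤ j → c j ⊆ c i) → (⋂ i, c i).Nonempty

/-- `d` is spherically `<κ`-complete: every (nonempty) ⊆-decreasing sequence of open
`d`-balls of length `< κ` has nonempty intersection. -/
def SphericallyLtComplete (κ : Cardinal.{u}) {X : Type u} (d : X → X → G) : Prop :=
  ∀ o : Ordinal.{u}, o ≠ 0 → o < κ.ord → ∀ c : o.ToType → Set X,
    (∀ i, ∃ x ε, 0 < ε ∧ c i = GBall d x ε) →
    (∀ i j, i ≤ j → c j ⊆ c i) → (⋂ i, c i).Nonempty

/-- `X` is a spherically complete `𝔾`-Polish space. -/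
def GPolishSphericallyComplete (G : Type u) [AddCommGroup G] [LinearOrder G] [IsOrderedAddMonoid G] (κ : Cardinal.{u})
    (X : Type u) [TopologicalSpace X] : Prop :=
  HasWeightLE κ X ∧
    ∃ d : X → X → G, IsGMetric d ∧ GCompatible d ∧ GCauchyComplete κ d ∧ SphericallyComplete d

/-- `X` is a spherically `<κ`-complete `𝔾`-Polish space. -/
def GPolishSphericallyLtComplete (G : Type u) [AddCommGroup G] [LinearOrder G] [IsOrderedAddMonoid G] (κ : Cardinal.{u})
    (X : Type u) [TopologicalSpace X] : Prop :=
  HasWeightLE κ X ∧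
    ∃ d : X → X → G, IsGMetric d ∧ GCompatible d ∧ GCauchyComplete κ d ∧
      SphericallyLtComplete κ d

end GMetric

/-! ### κ-Borel spaces -/

/-- `ℬ` is a `κ⁺`-algebra on `X`: closed under complements and unions of at most
κ-many sets. -/
def IsKplusAlgebra (κ : Cardinal.{u}) {X : Type u} (ℬ : Set (Set X)) : Prop :=
  (∀ S ∈ ℬ, Sᶜ ∈ ℬ) ∧
  (∀ (ι : Type u) (f : ι → Set X), #ι ≤ κ → (∀ i, f i ∈ ℬ) → (⋃ i, f i) ∈ ℬ)

/-- `ℬ` separates the points of `X`. -/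
def SepPoints {X : Type u} (ℬ : Set (Set X)) : Prop :=
  ∀ x y : X, x ≠ y → ∃ S ∈ ℬ, x ∈ S ∧ y ∉ S

/-- `(X, ℬ)` is a κ-Borel space: a `κ⁺`-algebra that separates points and is generated
(as a `κ⁺`-algebra) by a subfamily of size `≤ κ`. -/
def IsKBorelSpace (κ : Cardinal.{u}) {X : Type u} (ℬ : Set (Set X)) : Prop :=
  IsKplusAlgebra κ ℬ ∧ SepPoints ℬ ∧
    ∃ 𝒢 ⊆ ℬ, #𝒢 ≤ κ ∧
      ∀ ℬ' : Set (Set X), IsKplusAlgebra κ ℬ' → 𝒢 ⊆ ℬ' → ℬ ⊆ ℬ'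

/-- The restriction `ℬ↾A` of a family of subsets of `X` to `A ⊆ X`. -/
def RestrictFam {X : Type u} (ℬ : Set (Set X)) (A : Set X) : Set (Set ↥A) :=
  {T | ∃ S ∈ ℬ, T = Subtype.val ⁻¹' S}

/-- The family of κ-Borel sets of a topological space. -/
def KBorelFam (κ : Cardinal.{u}) (X : Type u) [TopologicalSpace X] : Set (Set X) :=
  {S | KBorel κ S}

/-- `e` is a κ-Borel isomorphism between `(X, ℬ)` and `(Y, 𝒞)`: a bijection under which
images and preimages of distinguished sets are distinguished. -/
def IsKBorelSpaceIso {X Y : Type u} (ℬ : Set (Set X)) (𝒞 : Set (Set Y)) (e : X ≃ Y) : Prop :=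
  (∀ S ∈ ℬ, e '' S ∈ 𝒞) ∧ (∀ S ∈ 𝒞, e ⁻¹' S ∈ ℬ)

/-- `(X, ℬ)` is a standard κ-Borel space: it is a κ-Borel space which is κ-Borel isomorphic
to a κ-Borel subset of the generalized Baire space (with the restricted κ-Borel structure). -/
def IsStandardKBorel (κ : Cardinal.{u}) {X : Type u} (ℬ : Set (Set X)) : Prop :=
  IsKBorelSpace κ ℬ ∧
    ∃ B₀ : Set (GenBaire κ), KBorel κ B₀ ∧
      ∃ e : X ≃ ↥B₀, IsKBorelSpaceIso ℬ (RestrictFam (KBorelFam κ (GenBaire κ)) B₀) e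

/-!
The sets `N_{x↾a}`, `a < κ`, form a decreasing neighbourhood base at each point of `X₀`, and by
regularity fewer than `κ` of them always contain a common one: this gives `κ`-additivity, and
flipping the coordinate `a` shows that no point is `κ`-isolated. There are at most
`Σ_{a<κ} 2^|a| = κ` basic sets since `2^{<κ} = κ`.

For `κ`-Lindelöfness, induct on the number `n` of zeros outside a finite set `F`: the point with
zero set `F` has a neighbourhood `N` of some length `a` inside a member of the cover, and every
point whose zeros extend `F` either lies in `N` or has a new zero `b < a`, which lowers `n` at the
cost of fewer than `κ` choices of `b`.

In the fair Choquet game, II answers I's move `(U_α, x_α)` by a neighbourhood of `x_α` of length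
`c_α > α` whose trace on the previous moves lies in `U_α`. The diagonal `y(α) = x_α(α)` then agrees
with each `x_α` below `c_α`; a countable set of zeros of `y` is bounded by some `β` and so consists of
zeros of `x_β`, hence `y ∈ X₀`, and by induction `y` lies in every move of II.
-/

open Filter Topology TopologicalSpace

section RegularCardinal

variable {κ : Cardinal.{u}}

theorem exists_gt_of_mk_lt (hreg : κ.IsRegular) {S : Set κ.ord.ToType} (hS : #S < κ) :
    ∃ c, ∀ b ∈ S, b < c := by
  refine not_isCofinal_iff.1 fun hcof => (Order.cof_le hcof).not_gt ?_
  rwa [Ordinal.cof_toType, hreg.cof_ord]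

theorem mk_Iio_toType_lt (a : κ.ord.ToType) : #(Iio a) < κ := by
  simpa using mk_Iio_lt a (by simp)

theorem sInter_mem_of_hasAntitoneBasis {α : Type u} {l : Filter α}
    {s : κ.ord.ToType → Set α} (hreg : κ.IsRegular) (hl : l.HasAntitoneBasis s)
    {S : Set (Set α)} (hS : #S < κ) (h : ∀ U ∈ S, U ∈ l) : ⋂₀ S ∈ l := by
  choose a ha using fun U : S => hl.mem_iff.1 (h U U.2)
  obtain ⟨c, hc⟩ := exists_gt_of_mk_lt hreg (mk_range_le.trans_lt hS : #(range a) < κ)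
  refine mem_of_superset (hl.mem c) fun x hx U hU => ha ⟨U, hU⟩ ?_
  exact hl.antitone (hc _ ⟨⟨U, hU⟩, rfl⟩).le hx

end RegularCardinal

section KappaProperties

variable {κ : Cardinal.{u}} {X : Type u} [TopologicalSpace X]

theorem kAdditive_of_hasAntitoneBasis (hreg : κ.IsRegular) {s : X → κ.ord.ToType → Set X}
    (hs : ∀ x, (𝓝 x).HasAntitoneBasis (s x)) : KAdditive κ X := fun _ hS hopen =>
  isOpen_iff_mem_nhds.2 fun x hx =>
    sInter_mem_of_hasAntitoneBasis hreg (hs x) hS fun U hU => (hopen U hU).mem_nhds (hx U hU)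

theorem kPerfect_of_kAdditive (hadd : KAdditive κ X) (h : ∀ x : X, ¬IsOpen {x}) :
    KPerfect κ X := fun x ⟨S, hS, hopen, hx⟩ => h x (hx ▸ hadd S hS hopen)

theorem RelOpenIn.subset {T U : Set X} (h : RelOpenIn T U) : U ⊆ T := by
  obtain ⟨W, -, rfl⟩ := h
  exact inter_subset_right

end KappaProperties

section CoveredByFewer

variable {κ : Cardinal.{u}} {X : Type u}

def CoveredByFewer (κ : Cardinal.{u}) (𝒰 : Set (Set X)) (A : Set X) : Prop :=
  ∃ 𝒱 ⊆ 𝒰, #𝒱 < κ ∧ A ⊆ ⋃₀ 𝒱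

variable {𝒰 : Set (Set X)} {A B : Set X}

theorem CoveredByFewer.mono (h : CoveredByFewer κ 𝒰 B) (hAB : A ⊆ B) : CoveredByFewer κ 𝒰 A :=
  let ⟨𝒱, h𝒱, hcard, hB⟩ := h
  ⟨𝒱, h𝒱, hcard, hAB.trans hB⟩

theorem coveredByFewer_of_subset_mem (hκ : ℵ₀ ≤ κ) {U : Set X} (hU : U ∈ 𝒰) (hA : A ⊆ U) :
    CoveredByFewer κ 𝒰 A :=
  ⟨{U}, singleton_subset_iff.2 hU, by simpa using one_lt_aleph0.trans_le hκ, by simpa using hA⟩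

theorem CoveredByFewer.union (hκ : ℵ₀ ≤ κ) (hA : CoveredByFewer κ 𝒰 A)
    (hB : CoveredByFewer κ 𝒰 B) : CoveredByFewer κ 𝒰 (A ∪ B) := by
  obtain ⟨𝒱, h𝒱, hcard, hA⟩ := hA
  obtain ⟨𝒲, h𝒲, hcard', hB⟩ := hB
  refine ⟨𝒱 ∪ 𝒲, union_subset h𝒱 h𝒲, (mk_union_le _ _).trans_lt (add_lt_of_lt hκ hcard hcard'),
    ?_⟩
  rw [sUnion_union]
  exact union_subset_union hA hB

theorem coveredByFewer_iUnion (hreg : κ.IsRegular) {ι : Type u} (hι : #ι < κ) {A : ι → Set X}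
    (h : ∀ i, CoveredByFewer κ 𝒰 (A i)) : CoveredByFewer κ 𝒰 (⋃ i, A i) := by
  choose 𝒱 h𝒱 hcard hA using h
  refine ⟨⋃ i, 𝒱 i, iUnion_subset h𝒱,
    (card_iUnion_lt_iff_forall_of_isRegular hreg hι).2 hcard, ?_⟩
  exact iUnion_subset fun i => (hA i).trans (sUnion_mono (subset_iUnion 𝒱 i))

end CoveredByFewer

namespace GenCantor

variable {κ : Cardinal.{u}}

/-- The basic open set `N_{y↾a}`. -/
def basicNbhd (a : κ.ord.ToType) (y : GenCantor κ) : Set (GenCantor κ) :=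
  {x | ∀ b < a, x b = y b}

theorem mem_basicNbhd_self (a : κ.ord.ToType) (y : GenCantor κ) : y ∈ basicNbhd a y :=
  fun _ _ => rfl

theorem antitone_basicNbhd (y : GenCantor κ) : Antitone (basicNbhd · y) :=
  fun _ _ hab _ hx b hb => hx b (hb.trans_le hab)

theorem basicNbhd_eq_of_mem {a : κ.ord.ToType} {x y : GenCantor κ} (h : x ∈ basicNbhd a y) :
    basicNbhd a x = basicNbhd a y := by
  ext z
  exact forall₂_congr fun b hb => by rw [h b hb]

theorem isOpen_basicNbhd (a : κ.ord.ToType) (y : GenCantor κ) : IsOpen (basicNbhd a y) :=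
  isOpen_generateFrom_of_mem ⟨a, y, rfl⟩

theorem isTopologicalBasis_basicNbhd (hκ : κ ≠ 0) :
    IsTopologicalBasis {S : Set (GenCantor κ) | ∃ a y, S = basicNbhd a y} := by
  have : Nonempty κ.ord.ToType := by
    rwa [Ordinal.nonempty_toType_iff, ne_eq, ord_eq_zero]
  refine ⟨?_, ?_, rfl⟩
  · rintro _ ⟨a, y, rfl⟩ _ ⟨b, z, rfl⟩ x ⟨hxa, hxb⟩
    refine ⟨basicNbhd (max a b) x, ⟨_, _, rfl⟩, mem_basicNbhd_self _ _,
      subset_inter ?_ ?_⟩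
    · rw [← basicNbhd_eq_of_mem hxa]
      exact antitone_basicNbhd x (le_max_left a b)
    · rw [← basicNbhd_eq_of_mem hxb]
      exact antitone_basicNbhd x (le_max_right a b)
  · refine eq_univ_of_forall fun x => ?_
    exact ⟨_, ⟨Classical.arbitrary _, x, rfl⟩, mem_basicNbhd_self _ x⟩

theorem hasAntitoneBasis_nhds (hκ : κ ≠ 0) (x : GenCantor κ) :
    (𝓝 x).HasAntitoneBasis (basicNbhd · x) := by
  refine ⟨((isTopologicalBasis_basicNbhd hκ).nhds_hasBasis).to_hasBasis ?_ ?_,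
    antitone_basicNbhd x⟩
  · rintro _ ⟨⟨a, y, rfl⟩, hx⟩
    exact ⟨a, trivial, (basicNbhd_eq_of_mem hx).le⟩
  · exact fun a _ => ⟨_, ⟨⟨a, x, rfl⟩, mem_basicNbhd_self a x⟩, le_rfl⟩

end GenCantor

open GenCantor

section FinZeros

variable {κ : Cardinal.{u}}

/-- The space `X₀`. -/
abbrev finZeros (κ : Cardinal.{u}) : Set (GenCantor κ) :=
  {x | {a | x a = false}.Finite}

theorem hasAntitoneBasis_nhds_finZeros (hκ : κ ≠ 0) (x : finZeros κ) :
    (𝓝 x).HasAntitoneBasis fun a => Subtype.val ⁻¹' basicNbhd a x.1 := by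
  rw [nhds_subtype]
  exact (hasAntitoneBasis_nhds hκ x.1).comap _

theorem mem_finZeros_of_eq_of_ne {x y : GenCantor κ} (hx : x ∈ finZeros κ) (a : κ.ord.ToType)
    (h : ∀ b ≠ a, y b = x b) : y ∈ finZeros κ := by
  refine (hx.insert a).subset fun b hb => ?_
  rcases eq_or_ne b a with rfl | hba
  · exact mem_insert b _
  · exact mem_insert_of_mem a ((h b hba).symm.trans hb)

theorem not_isOpen_singleton_finZeros (hκ : κ ≠ 0) (x : finZeros κ) : ¬IsOpen {x} := by
  intro h
  obtain ⟨a, ha⟩ := (hasAntitoneBasis_nhds_finZeros hκ x).mem_iff.1 (h.mem_nhds rfl)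
  let y : GenCantor κ := fun b => if b = a then !x.1 a else x.1 b
  have hy : y ∈ finZeros κ := mem_finZeros_of_eq_of_ne x.2 a fun b hb => if_neg hb
  have hyx : (⟨y, hy⟩ : finZeros κ) ∈ ({x} : Set _) := ha fun b hb => if_neg hb.ne
  simpa [y] using congrFun (congrArg Subtype.val hyx) a

theorem kAdditive_finZeros (hreg : κ.IsRegular) : KAdditive κ (finZeros κ) :=
  kAdditive_of_hasAntitoneBasis hreg (hasAntitoneBasis_nhds_finZeros hreg.ne_zero)

theorem kPerfect_finZeros (hreg : κ.IsRegular) : KPerfect κ (finZeros κ) :=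
  kPerfect_of_kAdditive (kAdditive_finZeros hreg) (not_isOpen_singleton_finZeros hreg.ne_zero)

theorem mk_basicNbhds_le (hreg : κ.IsRegular) (hpow : (2 : Cardinal.{u}) ^< κ = κ) :
    #{S : Set (GenCantor κ) | ∃ a y, S = basicNbhd a y} ≤ κ := by
  classical
  let extend (p : Σ a : κ.ord.ToType, Iio a → Bool) : GenCantor κ :=
    fun b => if h : b < p.1 then p.2 ⟨b, h⟩ else true
  have hsub : {S : Set (GenCantor κ) | ∃ a y, S = basicNbhd a y} ⊆
      range fun p => basicNbhd p.1 (extend p) := by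
    rintro _ ⟨a, y, rfl⟩
    refine ⟨⟨a, fun b => y b⟩, basicNbhd_eq_of_mem fun b hb => ?_⟩
    simp [extend, hb]
  have hlevel (a : κ.ord.ToType) : #(Iio a → Bool) ≤ κ := by
    simpa [hpow] using le_powerlt 2 (mk_Iio_toType_lt a)
  calc #{S : Set (GenCantor κ) | ∃ a y, S = basicNbhd a y}
      ≤ #(Σ a : κ.ord.ToType, Iio a → Bool) := (mk_le_mk_of_subset hsub).trans mk_range_le
    _ ≤ sum fun _ : κ.ord.ToType => κ := by rw [mk_sigma]; exact sum_le_sum _ _ hlevel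
    _ = κ := by rw [sum_const', mk_toType, card_ord, mul_eq_self hreg.aleph0_le]

theorem hasWeightLE_finZeros (hreg : κ.IsRegular) (hpow : (2 : Cardinal.{u}) ^< κ = κ) :
    HasWeightLE κ (finZeros κ) :=
  ⟨_, (isTopologicalBasis_basicNbhd hreg.ne_zero).isInducing IsInducing.subtypeVal,
    mk_image_le.trans (mk_basicNbhds_le hreg hpow)⟩

noncomputable def pointOfZeros (F : Finset κ.ord.ToType) : finZeros κ :=
  ⟨fun b => decide (b ∉ F), F.finite_toSet.subset fun b hb => by simpa using hb⟩

def zerosExtending (F : Finset κ.ord.ToType) (n : ℕ) : Set (finZeros κ) :=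
  {x | (F : Set κ.ord.ToType) ⊆ {b | x.1 b = false} ∧ {b | x.1 b = false}.ncard ≤ F.card + n}

theorem mem_basicNbhd_or_mem_zerosExtending_insert {F : Finset κ.ord.ToType} {n : ℕ}
    {x : finZeros κ} (hx : x ∈ zerosExtending F n) (a : κ.ord.ToType) :
    x.1 ∈ basicNbhd a (pointOfZeros F).1 ∨
      ∃ b < a, ∃ m, n = m + 1 ∧ x ∈ zerosExtending (insert b F) m := by
  by_cases h : ∃ b < a, b ∉ F ∧ x.1 b = false
  · obtain ⟨b, hba, hbF, hb⟩ := h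
    have hsub : ((insert b F : Finset _) : Set κ.ord.ToType) ⊆ {b | x.1 b = false} := by
      rw [Finset.coe_insert]
      exact insert_subset hb hx.1
    have hcard := (ncard_le_ncard hsub x.2).trans hx.2
    rw [ncard_coe_finset, Finset.card_insert_of_notMem hbF] at hcard
    obtain ⟨m, rfl⟩ : ∃ m, n = m + 1 := Nat.exists_eq_add_one.2 (by omega)
    refine .inr ⟨b, hba, m, rfl, hsub, ?_⟩
    rw [Finset.card_insert_of_notMem hbF]
    exact hx.2.trans_eq (by omega)
  · push Not at h
    refine .inl fun b hb => ?_
    by_cases hbF : b ∈ F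
    · simpa [pointOfZeros, hbF] using hx.1 hbF
    · simpa [pointOfZeros, hbF] using h b hb hbF

theorem exists_coveredByFewer_basicNbhd (hκ : ℵ₀ ≤ κ) {𝒰 : Set (Set (finZeros κ))}
    (hopen : ∀ U ∈ 𝒰, IsOpen U) (hcov : ⋃₀ 𝒰 = Set.univ) (x : finZeros κ) :
    ∃ a, CoveredByFewer κ 𝒰 (Subtype.val ⁻¹' basicNbhd a x.1) := by
  obtain ⟨U, hU, hxU⟩ := mem_sUnion.1 (hcov ▸ mem_univ x)
  have hne : κ ≠ 0 := (aleph0_pos.trans_le hκ).ne'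
  obtain ⟨a, ha⟩ := (hasAntitoneBasis_nhds_finZeros hne x).mem_iff.1 ((hopen U hU).mem_nhds hxU)
  exact ⟨a, coveredByFewer_of_subset_mem hκ hU ha⟩

theorem coveredByFewer_zerosExtending (hreg : κ.IsRegular) {𝒰 : Set (Set (finZeros κ))}
    (hopen : ∀ U ∈ 𝒰, IsOpen U) (hcov : ⋃₀ 𝒰 = Set.univ) (n : ℕ) (F : Finset κ.ord.ToType) :
    CoveredByFewer κ 𝒰 (zerosExtending F n) := by
  induction n generalizing F with
  | zero =>
    obtain ⟨a, ha⟩ := exists_coveredByFewer_basicNbhd hreg.aleph0_le hopen hcov (pointOfZeros F)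
    refine ha.mono fun x hx => ?_
    refine (mem_basicNbhd_or_mem_zerosExtending_insert hx a).resolve_right ?_
    rintro ⟨_, _, m, hm, _⟩
    omega
  | succ n ih =>
    obtain ⟨a, ha⟩ := exists_coveredByFewer_basicNbhd hreg.aleph0_le hopen hcov (pointOfZeros F)
    have hins := coveredByFewer_iUnion hreg (mk_Iio_toType_lt a) fun b : Iio a =>
      ih (insert b.1 F)
    refine (ha.union hreg.aleph0_le hins).mono fun x hx => ?_
    rcases mem_basicNbhd_or_mem_zerosExtending_insert hx a with h | ⟨b, hb, m, hm, hxb⟩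
    · exact .inl h
    · cases Nat.succ_injective hm
      exact .inr (mem_iUnion.2 ⟨⟨b, hb⟩, hxb⟩)

theorem kLindelof_finZeros (hreg : κ.IsRegular) (hunc : ℵ₀ < κ) : KLindelof κ (finZeros κ) := by
  intro 𝒰 hopen hcov
  obtain ⟨𝒱, h𝒱, hcard, hsub⟩ := coveredByFewer_iUnion hreg (by simpa using hunc)
    fun n : ULift ℕ => coveredByFewer_zerosExtending hreg hopen hcov n.down ∅
  refine ⟨𝒱, h𝒱, hcard, univ_subset_iff.1 fun x _ => hsub (mem_iUnion.2 ?_)⟩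
  exact ⟨⟨{b | x.1 b = false}.ncard⟩, by simp [zerosExtending]⟩

theorem mem_finZeros_of_forall_basicNbhd (hreg : κ.IsRegular) (hunc : ℵ₀ < κ) {y : GenCantor κ}
    (h : ∀ a, ∃ z ∈ finZeros κ, z ∈ basicNbhd a y) : y ∈ finZeros κ := by
  by_contra hinf
  let e := Set.Infinite.natEmbedding _ hinf
  have hS : #(range fun n => (e n).1) < κ :=
    (le_aleph0_iff_set_countable.2 (countable_range _)).trans_lt hunc
  obtain ⟨a, ha⟩ := exists_gt_of_mk_lt hreg hS
  obtain ⟨z, hz, hza⟩ := h a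
  refine (infinite_range_of_injective fun m n hmn => e.injective (Subtype.ext hmn)).mono ?_ hz
  rintro _ ⟨n, rfl⟩
  exact (hza _ (ha _ ⟨n, rfl⟩)).trans (e n).2

open Classical in
noncomputable def answerLevel (a : κ.ord.ToType) (x : finZeros κ) (U T : Set (finZeros κ)) :
    κ.ord.ToType :=
  if h : ∃ c, a < c ∧ Subtype.val ⁻¹' basicNbhd c x.1 ∩ T ⊆ U then h.choose else a

theorem answerLevel_spec {a : κ.ord.ToType} {x : finZeros κ} {U T : Set (finZeros κ)}
    (h : ∃ c, a < c ∧ Subtype.val ⁻¹' basicNbhd c x.1 ∩ T ⊆ U) :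
    a < answerLevel a x U T ∧ Subtype.val ⁻¹' basicNbhd (answerLevel a x U T) x.1 ∩ T ⊆ U := by
  rw [answerLevel, dif_pos h]
  exact h.choose_spec

theorem exists_basicNbhd_inter_subset (hκ : ℵ₀ ≤ κ) {T U : Set (finZeros κ)} (hU : RelOpenIn T U)
    {x : finZeros κ} (hx : x ∈ U) (a : κ.ord.ToType) :
    ∃ c, a < c ∧ Subtype.val ⁻¹' basicNbhd c x.1 ∩ T ⊆ U := by
  obtain ⟨W, hW, rfl⟩ := hU
  have hne : κ ≠ 0 := (aleph0_pos.trans_le hκ).ne'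
  have hbasis := hasAntitoneBasis_nhds_finZeros hne x
  obtain ⟨c, hc⟩ := hbasis.mem_iff.1 (hW.mem_nhds hx.1)
  obtain ⟨d, hd⟩ := (noMaxOrder hκ).exists_gt a
  exact ⟨max c d, lt_max_of_lt_right hd, fun y hy => ⟨hc (hbasis.antitone le_sup_left hy.1), hy.2⟩⟩

/-- II's answer at round `a` to I's move `(U, x)` when the previous moves meet in `T`. Taking the
level `c > a` with `N_{x↾c} ∩ T ⊆ U` is what later puts the diagonal of I's points into `U`. -/
def answer (a : κ.ord.ToType) (x : finZeros κ) (U T : Set (finZeros κ)) : Set (finZeros κ) :=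
  Subtype.val ⁻¹' basicNbhd (answerLevel a x U T) x.1 ∩ U

theorem answer_legal {a : κ.ord.ToType} {x : finZeros κ} {U T : Set (finZeros κ)}
    (hU : RelOpenIn T U) (hx : x ∈ U) :
    RelOpenIn T (answer a x U T) ∧ x ∈ answer a x U T ∧ answer a x U T ⊆ U := by
  obtain ⟨W, hW, rfl⟩ := hU
  refine ⟨⟨_ ∩ W, ((isOpen_basicNbhd _ _).preimage continuous_subtype_val).inter hW,
    (inter_assoc _ _ _).symm⟩, ⟨mem_basicNbhd_self _ _, hx⟩, inter_subset_right⟩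

noncomputable def choquetStrategy : Strategy κ (finZeros κ) := fun f =>
  wellFounded_lt.fix fun a V => answer a (f a).2 (f a).1 (⋂ b, ⋂ h : b < a, V b h)

theorem choquetStrategy_apply (f : IMoves κ (finZeros κ)) (a : κ.ord.ToType) :
    choquetStrategy f a = answer a (f a).2 (f a).1 (InterBelow (choquetStrategy f) a) := by
  rw [choquetStrategy, WellFounded.fix_eq]
  rfl

theorem isIIStrategy_choquetStrategy : IsIIStrategy (choquetStrategy (κ := κ)) := by
  intro f g a
  induction a using WellFoundedLT.induction with
  | _ a ih =>
    intro hfg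
    have hT : InterBelow (choquetStrategy f) a = InterBelow (choquetStrategy g) a :=
      iInter₂_congr fun b hb => ih b hb fun c hc => hfg c (hc.trans hb.le)
    rw [choquetStrategy_apply, choquetStrategy_apply, hT, hfg a le_rfl]

theorem nonempty_iInter_choquetStrategy (hreg : κ.IsRegular) (hunc : ℵ₀ < κ)
    (f : IMoves κ (finZeros κ))
    (hrun : ∀ a, LegalI choquetStrategy f a ∧ LegalII choquetStrategy f a) :
    (⋂ a, choquetStrategy f a).Nonempty := by
  let x a := (f a).2
  let c a := answerLevel a (x a) (f a).1 (InterBelow (choquetStrategy f) a)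
  have hc (a) : a < c a ∧
      Subtype.val ⁻¹' basicNbhd (c a) (x a).1 ∩ InterBelow (choquetStrategy f) a ⊆ (f a).1 :=
    answerLevel_spec (exists_basicNbhd_inter_subset hreg.aleph0_le (hrun a).1.1 (hrun a).1.2 a)
  have hagree {a b} (hab : a ≤ b) : (x b).1 ∈ basicNbhd (c a) (x a).1 := by
    rcases hab.eq_or_lt with rfl | hab
    · exact mem_basicNbhd_self _ _
    · have hxb : x b ∈ InterBelow (choquetStrategy f) b := (hrun b).1.1.subset (hrun b).1.2
      have hxa : x b ∈ choquetStrategy f a := mem_iInter₂.1 hxb a hab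
      rw [choquetStrategy_apply] at hxa
      exact hxa.1
  let y : GenCantor κ := fun e => (x e).1 e
  have hy (a) : y ∈ basicNbhd (c a) (x a).1 := fun e he => by
    rcases le_or_gt e a with h | h
    · exact (hagree h e (hc e).1).symm
    · exact hagree h.le e he
  have hyX : y ∈ finZeros κ := mem_finZeros_of_forall_basicNbhd hreg hunc fun a =>
    ⟨(x a).1, (x a).2, fun e he => (hy a e (he.trans (hc a).1)).symm⟩
  refine ⟨⟨y, hyX⟩, mem_iInter.2 fun a => ?_⟩
  induction a using WellFoundedLT.induction with
  | _ a ih =>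
    rw [choquetStrategy_apply]
    exact ⟨hy a, (hc a).2 ⟨hy a, mem_iInter₂.2 ih⟩⟩

theorem fSCSpace_finZeros (hreg : κ.IsRegular) (hunc : ℵ₀ < κ)
    (hpow : (2 : Cardinal.{u}) ^< κ = κ) : fSCSpace κ (finZeros κ) :=
  ⟨hasWeightLE_finZeros hreg hpow, choquetStrategy, isIIStrategy_choquetStrategy,
    fun f a _ hI => by rw [LegalII, choquetStrategy_apply]; exact answer_legal hI.1 hI.2,
    fun f hrun => .inr (nonempty_iInter_choquetStrategy hreg hunc f hrun)⟩

end FinZeros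

/-- the set of elements of 2^κ with only finitely many zero values is a
nonempty κ-additive κ-perfect κ-Lindelöf fSC_κ-space. -/
theorem stmt_16 (κ : Cardinal.{u}) (hreg : κ.IsRegular) (hunc : ℵ₀ < κ)
    (hpow : (2 : Cardinal.{u}) ^< κ = κ) :
    Nonempty ↥{x : GenCantor κ | {a | x a = false}.Finite} ∧
    KAdditive κ ↥{x : GenCantor κ | {a | x a = false}.Finite} ∧
    KPerfect κ ↥{x : GenCantor κ | {a | x a = false}.Finite} ∧
    KLindelof κ ↥{x : GenCantor κ | {a | x a = false}.Finite} ∧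
    fSCSpace κ ↥{x : GenCantor κ | {a | x a = false}.Finite} :=
  ⟨⟨pointOfZeros ∅⟩, kAdditive_finZeros hreg, kPerfect_finZeros hreg,
    kLindelof_finZeros hreg hunc, fSCSpace_finZeros hreg hunc hpow⟩

end GDST
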